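/- Let L > 0 be fixed. For each ω₀ ∈ (2π²/L², +∞) let β₂(ω₀) denote the unique value in (0, 2ω₀) with T(β₂(ω₀); ω₀) = L. Then the function ω₀ ↦ k(β₂(ω₀); ω₀), assigning to ω₀ the elliptic modulus of the corresponding cnoidal wave of period L, is strictly increasing on (2π²/L², +∞). -/

import Mathlib

set_option maxHeartbeats 1000000

open MeasureTheory Set

/-- The complete elliptic integral of the first kind,
`K(k) = ∫₀¹ dt / √((1 − t²)(1 − k²t²))`. -/
noncomputable def ellipticK (k : ℝ) : ℝ :=
  ∫ t in (0 : ℝ)..1, 1 / Real.sqrt ((1 - t ^ 2) * (1 - k ^ 2 * t ^ 2))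

/-- `ρ(β₂; ω₀) = √(9ω₀² − 3β₂² + 6ω₀β₂)`. -/
noncomputable def rho (ω₀ β₂ : ℝ) : ℝ :=
  Real.sqrt (9 * ω₀ ^ 2 - 3 * β₂ ^ 2 + 6 * ω₀ * β₂)

/-- The elliptic modulus `k(β₂; ω₀) ∈ (0,1)`, defined by
`k² = 1/2 + 3(ω₀ − β₂)/(2ρ(β₂; ω₀))`. -/
noncomputable def modulus (ω₀ β₂ : ℝ) : ℝ :=
  Real.sqrt (1 / 2 + 3 * (ω₀ - β₂) / (2 * rho ω₀ β₂))

/-- The period function `T(β₂; ω₀) = (2√6/√(ρ(β₂; ω₀))) K(k(β₂; ω₀))`. -/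
noncomputable def periodT (ω₀ β₂ : ℝ) : ℝ :=
  2 * Real.sqrt 6 / Real.sqrt (rho ω₀ β₂) * ellipticK (modulus ω₀ β₂)


open MeasureTheory Set

lemma rpow_neg_half_eq (x : ℝ) (hx : 0 ≤ x) : x ^ (-(1/2) : ℝ) = 1 / Real.sqrt x := by
  rw [Real.rpow_neg hx, Real.sqrt_eq_rpow]; exact (one_div _).symm

lemma integrable_majorant :
    IntervalIntegrable (fun t : ℝ => (1 - t) ^ (-(1/2) : ℝ)) volume 0 1 := by
  have h := intervalIntegral.intervalIntegrable_rpow' (a := 0) (b := 1)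
    (r := -(1/2)) (by norm_num)
  simpa using (h.comp_sub_left 1).symm

lemma integrable_of_bound (f : ℝ → ℝ) (M : ℝ)
    (hm : AEStronglyMeasurable f (volume.restrict (Set.uIoc (0:ℝ) 1)))
    (hb : ∀ t ∈ Set.Ioc (0:ℝ) 1, |f t| ≤ M * (1 - t) ^ (-(1/2) : ℝ)) :
    IntervalIntegrable f volume 0 1 := by
  have hM : 0 ≤ M := by
    have h2 := hb (1/2) (by norm_num)
    have h3 : (0:ℝ) < ((1:ℝ) - 1/2) ^ (-(1/2) : ℝ) := by
      apply Real.rpow_pos_of_pos; norm_num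
    nlinarith [abs_nonneg (f (1/2))]
  apply IntervalIntegrable.mono_fun (integrable_majorant.const_mul M) hm
  rw [Set.uIoc_of_le (by norm_num : (0:ℝ) ≤ 1)]
  refine (ae_restrict_iff' measurableSet_Ioc).2 (Filter.Eventually.of_forall ?_)
  intro t ht
  have h0 : (0:ℝ) ≤ (1 - t) ^ (-(1/2) : ℝ) := Real.rpow_nonneg (by linarith [ht.2]) _
  have := hb t ht
  simp only [Real.norm_eq_abs]
  rw [abs_of_nonneg (mul_nonneg hM h0)]
  exact this

lemma meas_test (k : ℝ) : Measurable (fun t : ℝ => 1 / Real.sqrt ((1 - t ^ 2) * (1 - k ^ 2 * t ^ 2))) := by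
  fun_prop

lemma meas_test2 : Measurable (fun t : ℝ => t^2 / Real.sqrt (1 - t ^ 2)) := by
  fun_prop

lemma core_bound {t : ℝ} (ht : t ∈ Ioc (0:ℝ) 1) :
    1 / Real.sqrt (1 - t^2) ≤ (1-t) ^ (-(1/2):ℝ) := by
  rw [rpow_neg_half_eq _ (by linarith [ht.2])]
  rcases eq_or_lt_of_le ht.2 with h | h
  · subst h; norm_num
  · have h1 : 0 < 1 - t := by linarith
    have h2 : Real.sqrt (1 - t) ≤ Real.sqrt (1 - t^2) :=
      Real.sqrt_le_sqrt (by nlinarith [ht.1])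
    exact one_div_le_one_div_of_le (Real.sqrt_pos.2 h1) h2

lemma num_bound {n : ℝ → ℝ} {t : ℝ} (hn : |n t| ≤ 1) (ht : t ∈ Ioc (0:ℝ) 1) :
    |n t / Real.sqrt (1 - t^2)| ≤ 1 * (1-t) ^ (-(1/2):ℝ) := by
  rw [abs_div, abs_of_nonneg (Real.sqrt_nonneg _), one_mul]
  calc |n t| / Real.sqrt (1 - t^2) ≤ 1 / Real.sqrt (1 - t^2) := by
        rcases eq_or_lt_of_le (Real.sqrt_nonneg (1 - t^2)) with h | h
        · rw [← h]; simp
        · exact div_le_div_of_nonneg_right hn h.le |>.trans_eq rfl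
      _ ≤ (1-t) ^ (-(1/2):ℝ) := core_bound ht

lemma integrable_gC : IntervalIntegrable (fun t : ℝ => 1 / Real.sqrt (1 - t^2)) volume 0 1 := by
  apply integrable_of_bound _ 1 (Measurable.aestronglyMeasurable (by fun_prop))
  intro t ht
  simpa using num_bound (n := fun _ => (1:ℝ)) (by norm_num) ht

lemma integrable_gD : IntervalIntegrable (fun t : ℝ => t^2 / Real.sqrt (1 - t^2)) volume 0 1 := by
  apply integrable_of_bound _ 1 (Measurable.aestronglyMeasurable (by fun_prop))
  intro t ht
  exact num_bound (n := fun t => t^2) (by rw [abs_of_nonneg (sq_nonneg t)]; nlinarith [ht.1, ht.2]) ht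

lemma integrable_gE :
    IntervalIntegrable (fun t : ℝ => (1 - 2*t^2) / Real.sqrt (1 - t^2)) volume 0 1 := by
  apply integrable_of_bound _ 1 (Measurable.aestronglyMeasurable (by fun_prop))
  intro t ht
  exact num_bound (n := fun t => 1 - 2*t^2) (by simp only [abs_le]; constructor <;> nlinarith [ht.1, ht.2, sq_nonneg t]) ht

lemma sqrt_prod_ge {k t : ℝ} (hk0 : 0 ≤ k) (hk1 : k < 1) (ht0 : 0 ≤ t) (ht1 : t ≤ 1) :
    Real.sqrt (1 - t^2) * Real.sqrt (1 - k^2) ≤ Real.sqrt ((1 - t ^ 2) * (1 - k ^ 2 * t ^ 2)) := by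
  rw [Real.sqrt_mul (by nlinarith : (0:ℝ) ≤ 1 - t^2)]
  apply mul_le_mul_of_nonneg_left _ (Real.sqrt_nonneg _)
  apply Real.sqrt_le_sqrt
  nlinarith [mul_nonneg (sq_nonneg k) (show (0:ℝ) ≤ 1 - t^2 by nlinarith)]

lemma fK_le_gC {k t : ℝ} (hk0 : 0 ≤ k) (hk1 : k < 1) (ht0 : 0 ≤ t) (ht1 : t ≤ 1) :
    1 / Real.sqrt ((1 - t ^ 2) * (1 - k ^ 2 * t ^ 2)) ≤
      (1 / Real.sqrt (1 - k^2)) * (1 / Real.sqrt (1 - t^2)) := by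
  have hc : 0 < Real.sqrt (1 - k^2) := Real.sqrt_pos.2 (by nlinarith)
  rcases eq_or_lt_of_le ht1 with h | h
  · subst h; norm_num
  · have ha : 0 < Real.sqrt (1 - t^2) := Real.sqrt_pos.2 (by nlinarith)
    rw [div_mul_div_comm, one_mul]
    apply one_div_le_one_div_of_le (by positivity)
    rw [mul_comm]
    exact sqrt_prod_ge hk0 hk1 ht0 ht1

lemma integrable_fK {k : ℝ} (hk0 : 0 ≤ k) (hk1 : k < 1) :
    IntervalIntegrable (fun t : ℝ => 1 / Real.sqrt ((1 - t ^ 2) * (1 - k ^ 2 * t ^ 2)))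
      volume 0 1 := by
  apply integrable_of_bound _ (1 / Real.sqrt (1 - k^2))
    (Measurable.aestronglyMeasurable (by fun_prop))
  intro t ht
  rw [abs_of_nonneg (by positivity)]
  calc 1 / Real.sqrt ((1 - t ^ 2) * (1 - k ^ 2 * t ^ 2))
      ≤ (1 / Real.sqrt (1 - k^2)) * (1 / Real.sqrt (1 - t^2)) :=
        fK_le_gC hk0 hk1 ht.1.le ht.2
    _ ≤ (1 / Real.sqrt (1 - k^2)) * ((1-t) ^ (-(1/2):ℝ)) := by
        apply mul_le_mul_of_nonneg_left (core_bound ht) (by positivity)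

noncomputable def Cint : ℝ := ∫ t in (0:ℝ)..1, 1 / Real.sqrt (1 - t^2)
noncomputable def Dint : ℝ := ∫ t in (0:ℝ)..1, t^2 / Real.sqrt (1 - t^2)

lemma integral_gE_eq_zero :
    (∫ t in (0:ℝ)..1, (1 - 2*t^2) / Real.sqrt (1 - t^2)) = 0 := by
  have h := intervalIntegral.integral_eq_sub_of_hasDeriv_right_of_le
    (f := fun t : ℝ => t * Real.sqrt (1 - t^2))
    (f' := fun t : ℝ => (1 - 2*t^2) / Real.sqrt (1 - t^2))
    (a := 0) (b := 1) zero_le_one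
    (by
      apply Continuous.continuousOn
      exact continuous_id.mul (Real.continuous_sqrt.comp (by continuity)))
    (by
      intro x hx
      have hx1 : 0 < 1 - x^2 := by nlinarith [hx.1, hx.2]
      have hs : 0 < Real.sqrt (1 - x^2) := Real.sqrt_pos.2 hx1
      have hs2 : Real.sqrt (1 - x^2) ^ 2 = 1 - x^2 := Real.sq_sqrt hx1.le
      have h1 : HasDerivAt (fun t : ℝ => 1 - t^2) (-(2*x)) x := by
        simpa using ((hasDerivAt_pow 2 x).const_sub 1)
      have h2 : HasDerivAt (fun t : ℝ => Real.sqrt (1 - t^2))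
          (-(2*x) / (2 * Real.sqrt (1 - x^2))) x := h1.sqrt (by positivity)
      have h3 : HasDerivAt (fun y : ℝ => y * Real.sqrt (1 - y^2))
          (1 * Real.sqrt (1 - x^2) + x * (-(2*x) / (2 * Real.sqrt (1 - x^2)))) x := by
        exact (hasDerivAt_id' x).mul h2
      apply HasDerivAt.hasDerivWithinAt
      show HasDerivAt _ ((1 - 2*x^2) / Real.sqrt (1 - x^2)) x
      refine h3.congr_deriv ?_
      symm
      rw [div_eq_iff hs.ne']
      field_simp
      nlinarith [hs2]
    )
    integrable_gE
  simpa using h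

lemma C_le_2D : Cint ≤ 2 * Dint := by
  have hsub : (∫ t in (0:ℝ)..1, (1 - 2*t^2) / Real.sqrt (1 - t^2))
      = Cint - 2 * Dint := by
    rw [Cint, Dint, ← intervalIntegral.integral_const_mul,
      ← intervalIntegral.integral_sub integrable_gC (integrable_gD.const_mul 2)]
    apply intervalIntegral.integral_congr
    intro t _
    simp only
    ring
  nlinarith [integral_gE_eq_zero, hsub]


lemma half_le_ellipticK {k : ℝ} (hk0 : 0 ≤ k) (hk1 : k < 1) : 1/2 ≤ ellipticK k := by
  have h : (∫ t in (0:ℝ)..1, (1 - t)) ≤ ellipticK k := by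
    apply intervalIntegral.integral_mono_on zero_le_one
      (by apply Continuous.intervalIntegrable; continuity) (integrable_fK hk0 hk1)
    intro t ht
    rcases eq_or_lt_of_le ht.2 with h | h
    · subst h; norm_num
    · have ha : 0 < 1 - t^2 := by nlinarith [ht.1]
      have hmul : k^2*t^2 ≤ k^2 := by nlinarith [mul_nonneg (sq_nonneg k) ha.le]
      have hb : 0 < 1 - k^2*t^2 := by nlinarith
      have h1 : 0 < (1 - t ^ 2) * (1 - k ^ 2 * t ^ 2) := mul_pos ha hb
      have h2 : (1 - t ^ 2) * (1 - k ^ 2 * t ^ 2) ≤ 1 := by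
        nlinarith [ht.1, ht.2, sq_nonneg t]
      have h3 : Real.sqrt ((1 - t ^ 2) * (1 - k ^ 2 * t ^ 2)) ≤ 1 :=
        Real.sqrt_le_one.mpr h2
      have h4 : 0 < Real.sqrt ((1 - t ^ 2) * (1 - k ^ 2 * t ^ 2)) := Real.sqrt_pos.2 h1
      calc 1 - t ≤ 1 := by linarith [ht.1]
        _ ≤ 1 / Real.sqrt ((1 - t ^ 2) * (1 - k ^ 2 * t ^ 2)) := by
            rw [le_div_iff₀ h4]; linarith
  have hval : (∫ t in (0:ℝ)..1, (1 - t : ℝ)) = 1/2 := by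
    rw [intervalIntegral.integral_sub intervalIntegrable_const intervalIntegral.intervalIntegrable_id]
    simp [integral_id]
    norm_num
  rw [← hval]; exact h

lemma ellipticK_le {k : ℝ} (hk0 : 0 ≤ k) (hk1 : k < 1) :
    ellipticK k * Real.sqrt (1 - k^2) ≤ Cint := by
  have hc : 0 < Real.sqrt (1 - k^2) := Real.sqrt_pos.2 (by nlinarith)
  have h : ellipticK k ≤ (1 / Real.sqrt (1 - k^2)) * Cint := by
    rw [Cint, ← intervalIntegral.integral_const_mul]
    apply intervalIntegral.integral_mono_on zero_le_one (integrable_fK hk0 hk1)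
      (integrable_gC.const_mul _)
    intro t ht
    exact fK_le_gC hk0 hk1 ht.1 ht.2
  calc ellipticK k * Real.sqrt (1 - k^2)
      ≤ ((1 / Real.sqrt (1 - k^2)) * Cint) * Real.sqrt (1 - k^2) :=
        mul_le_mul_of_nonneg_right h hc.le
    _ = Cint := by field_simp

lemma Dint_nonneg : 0 ≤ Dint := by
  rw [Dint]
  apply intervalIntegral.integral_nonneg zero_le_one
  intro t _
  positivity

lemma ellipticK_increment {k₁ k₂ : ℝ} (h0 : 0 ≤ k₁) (h12 : k₁ ≤ k₂) (h2 : k₂ < 1) :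
    ellipticK k₁ + (k₂^2 - k₁^2)/2 * Dint ≤ ellipticK k₂ := by
  have key : (∫ t in (0:ℝ)..1,
      (1 / Real.sqrt ((1 - t ^ 2) * (1 - k₁ ^ 2 * t ^ 2))
        + (k₂^2 - k₁^2)/2 * (t^2 / Real.sqrt (1 - t^2))))
      ≤ ellipticK k₂ := by
    apply intervalIntegral.integral_mono_on zero_le_one
      ((integrable_fK h0 (lt_of_le_of_lt h12 h2)).add (integrable_gD.const_mul _))
      (integrable_fK (le_trans h0 h12) h2)
    intro t ht
    rcases eq_or_lt_of_le ht.2 with h | h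
    · subst h; norm_num
    · have ht0 := ht.1
      have hta : 0 < 1 - t^2 := by nlinarith
      set st := Real.sqrt (1 - t^2) with hst
      have hstpos : 0 < st := Real.sqrt_pos.2 hta
      have hst2 : st^2 = 1 - t^2 := Real.sq_sqrt hta.le
      have hb1 : k₁^2*t^2 ≤ k₂^2*t^2 := by
        apply mul_le_mul_of_nonneg_right _ (sq_nonneg t)
        nlinarith
      have hk20 : 0 ≤ k₂ := le_trans h0 h12
      have hb2 : k₂^2*t^2 < 1 := by
        nlinarith [mul_nonneg (sq_nonneg k₂) hta.le, sq_nonneg k₂]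
      set a := k₁^2*t^2 with hadef
      set b := k₂^2*t^2 with hbdef
      have ha0 : 0 ≤ a := by positivity
      have hb0 : 0 ≤ b := by positivity
      set sa := Real.sqrt (1 - a) with hsadef
      set sb := Real.sqrt (1 - b) with hsbdef
      have hsapos : 0 < sa := Real.sqrt_pos.2 (by nlinarith)
      have hsbpos : 0 < sb := Real.sqrt_pos.2 (by nlinarith)
      have hsa2 : sa^2 = 1 - a := Real.sq_sqrt (by nlinarith)
      have hsb2 : sb^2 = 1 - b := Real.sq_sqrt (by nlinarith)
      have hsa1 : sa ≤ 1 := Real.sqrt_le_one.mpr (by nlinarith)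
      have hsb1 : sb ≤ 1 := Real.sqrt_le_one.mpr (by nlinarith)
      have e1 : 1/sb - 1/sa = (b-a)/(sa*sb*(sa+sb)) := by
        rw [div_sub_div _ _ (ne_of_gt hsbpos) (ne_of_gt hsapos),
          div_eq_div_iff (by positivity) (by positivity)]
        linear_combination (sa*sb) * hsa2 - (sa*sb) * hsb2
      have hd2 : sa*sb*(sa+sb) ≤ 2 := by
        have t1 : sa*sb ≤ 1 := by nlinarith
        have t2 : sa+sb ≤ 2 := by linarith
        calc sa*sb*(sa+sb) ≤ 1*2 :=
              mul_le_mul t1 t2 (by positivity) (by norm_num)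
          _ = 2 := by norm_num
      have e2 : (b-a)/2 ≤ (b-a)/(sa*sb*(sa+sb)) := by
        apply div_le_div_of_nonneg_left (by nlinarith) (by positivity) hd2
      have hgoal : 1/sa + (b-a)/2 ≤ 1/sb := by linarith
      have hrw1 : (1 - t ^ 2) * (1 - k₁ ^ 2 * t ^ 2) = (1 - t^2) * (1 - a) := by rw [hadef]
      have hrw2 : (1 - t ^ 2) * (1 - k₂ ^ 2 * t ^ 2) = (1 - t^2) * (1 - b) := by rw [hbdef]
      rw [hrw1, hrw2, Real.sqrt_mul hta.le, Real.sqrt_mul hta.le, ← hst, ← hsadef, ← hsbdef]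
      have hstnn : 0 ≤ 1/st := by positivity
      calc 1 / (st * sa) + (k₂ ^ 2 - k₁ ^ 2) / 2 * (t ^ 2 / st)
          = (1/sa + (b-a)/2) * (1/st) := by rw [hadef, hbdef]; ring
        _ ≤ (1/sb) * (1/st) := mul_le_mul_of_nonneg_right hgoal hstnn
        _ = 1 / (st * sb) := by ring
  have hsplit : (∫ t in (0:ℝ)..1,
      (1 / Real.sqrt ((1 - t ^ 2) * (1 - k₁ ^ 2 * t ^ 2))
        + (k₂^2 - k₁^2)/2 * (t^2 / Real.sqrt (1 - t^2))))
      = ellipticK k₁ + (k₂^2 - k₁^2)/2 * Dint := by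
    rw [intervalIntegral.integral_add (integrable_fK h0 (lt_of_le_of_lt h12 h2))
      (integrable_gD.const_mul _), intervalIntegral.integral_const_mul]
    rfl
  linarith [key, hsplit.symm.trans_le key]

lemma K4_mono {k₁ k₂ : ℝ} (h0 : 0 ≤ k₁) (h12 : k₁ ≤ k₂) (h2 : k₂ < 1) :
    ellipticK k₁ ^ 4 * ((k₁^2)^2 - k₁^2 + 1) ≤ ellipticK k₂ ^ 4 * ((k₂^2)^2 - k₂^2 + 1) := by
  have hk11 : k₁ < 1 := lt_of_le_of_lt h12 h2
  have hk20 : 0 ≤ k₂ := le_trans h0 h12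
  set u₁ := k₁^2 with hu1
  set u₂ := k₂^2 with hu2
  have hu10 : 0 ≤ u₁ := sq_nonneg _
  have hu12 : u₁ ≤ u₂ := by nlinarith
  have hu21 : u₂ < 1 := by nlinarith
  set K₁ := ellipticK k₁ with hK1def
  set K₂ := ellipticK k₂ with hK2def
  have hK1pos : (0:ℝ) < K₁ := lt_of_lt_of_le (by norm_num) (half_le_ellipticK h0 hk11)
  have hC : K₁ * Real.sqrt (1 - u₁) ≤ Cint := ellipticK_le h0 hk11
  have hD : 0 ≤ Dint := Dint_nonneg
  have hCD : Cint ≤ 2 * Dint := C_le_2D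
  have hInc : K₁ + (u₂ - u₁)/2 * Dint ≤ K₂ := ellipticK_increment h0 h12 h2
  set δ := (u₂ - u₁)/2 * Dint with hδdef
  have hδ0 : 0 ≤ δ := by
    apply mul_nonneg _ hD
    linarith
  have hK2ge : K₁ + δ ≤ K₂ := hInc
  have hK24 : K₁^4 + 4*K₁^3*δ ≤ K₂^4 := by
    have h4 : K₁^4 + 4*K₁^3*δ ≤ (K₁ + δ)^4 := by nlinarith [sq_nonneg (K₁*δ), sq_nonneg (δ^2), mul_nonneg (mul_nonneg hK1pos.le hδ0) (sq_nonneg δ)]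
    have h5 : (K₁ + δ)^4 ≤ K₂^4 := by
      apply pow_le_pow_left₀ (by linarith) hK2ge
    linarith
  have hP2pos : (0:ℝ) < u₂^2 - u₂ + 1 := by nlinarith [sq_nonneg (2*u₂ - 1)]
  have key : K₁ * (1 - u₁ - u₂) ≤ 2 * Dint * (u₂^2 - u₂ + 1) := by
    rcases le_or_gt (1 - u₁ - u₂) 0 with hcase | hcase
    · have : K₁ * (1 - u₁ - u₂) ≤ 0 := mul_nonpos_of_nonneg_of_nonpos hK1pos.le hcase
      have : 0 ≤ 2 * Dint * (u₂^2 - u₂ + 1) := by positivity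
      linarith
    · set s := Real.sqrt (1 - u₁) with hsdef
      have hu11 : u₁ < 1 := lt_of_le_of_lt hu12 hu21
      have hspos : 0 < s := Real.sqrt_pos.2 (by linarith)
      have hs2 : s^2 = 1 - u₁ := Real.sq_sqrt (by linarith)
      have hs1 : s ≤ 1 := Real.sqrt_le_one.mpr (by linarith)
      have hu20 : 0 ≤ u₂ := le_trans hu10 hu12
      have hpoly : (1 - u₁ - u₂) ≤ s * (u₂^2 - u₂ + 1) := by
        nlinarith [mul_nonneg hspos.le (sub_nonneg.2 hs1),
          mul_nonneg (mul_nonneg (sub_nonneg.2 hs1) hu20) (sub_nonneg.2 hu21.le),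
          sq_nonneg u₂]
      have hCnn : 0 ≤ Cint := le_trans (mul_nonneg hK1pos.le hspos.le) hC
      have hK1le : K₁ ≤ Cint / s := by
        rw [le_div_iff₀ hspos]; exact hC
      have step1 : K₁ * (1 - u₁ - u₂) ≤ Cint * ((1 - u₁ - u₂)/s) := by
        calc K₁ * (1 - u₁ - u₂) ≤ (Cint / s) * (1 - u₁ - u₂) :=
              mul_le_mul_of_nonneg_right hK1le hcase.le
          _ = Cint * ((1 - u₁ - u₂)/s) := by ring
      have step2 : Cint * ((1 - u₁ - u₂)/s) ≤ Cint * (u₂^2 - u₂ + 1) := by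
        apply mul_le_mul_of_nonneg_left _ hCnn
        rw [div_le_iff₀ hspos]
        linarith [hpoly]
      have step3 : Cint * (u₂^2 - u₂ + 1) ≤ 2 * Dint * (u₂^2 - u₂ + 1) :=
        mul_le_mul_of_nonneg_right hCD hP2pos.le
      linarith
  have F1 := mul_le_mul_of_nonneg_left key
    (show (0:ℝ) ≤ K₁^3 * (u₂ - u₁) from mul_nonneg (pow_nonneg hK1pos.le 3) (by linarith))
  have F2 := mul_le_mul_of_nonneg_right hK24 hP2pos.le
  have id1 : K₁^4*(u₁^2-u₁+1)
      = K₁^4*(u₂^2-u₂+1) + K₁^3*(u₂-u₁)*(K₁*(1-u₁-u₂)) := by ring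
  have id2 : K₁^3*(u₂-u₁)*(2*Dint*(u₂^2-u₂+1))
      = (K₁^4+4*K₁^3*δ)*(u₂^2-u₂+1) - K₁^4*(u₂^2-u₂+1) := by rw [hδdef]; ring
  have goal' : K₁^4*(u₁^2-u₁+1) ≤ K₂^4*(u₂^2-u₂+1) := by linarith
  calc ellipticK k₁ ^ 4 * ((k₁^2)^2 - k₁^2 + 1) = K₁^4*(u₁^2-u₁+1) := by rw [hK1def, hu1]
    _ ≤ K₂^4*(u₂^2-u₂+1) := goal'
    _ = ellipticK k₂ ^ 4 * ((k₂^2)^2 - k₂^2 + 1) := by rw [hK2def, hu2]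




lemma omega_char {L ω β : ℝ} (hL : 0 < L) (hω : 0 < ω) (hβ0 : 0 < β) (hβ2 : β < 2*ω)
    (hper : periodT ω β = L) :
    0 < modulus ω β ∧ modulus ω β < 1 ∧
      9 * ω^2 * L^4
        = 576 * ellipticK (modulus ω β) ^ 4
            * (((modulus ω β)^2)^2 - (modulus ω β)^2 + 1) := by
  have hA : 0 < 9 * ω ^ 2 - 3 * β ^ 2 + 6 * ω * β := by nlinarith
  set ρ := rho ω β with hρdef
  have hρ : 0 < ρ := Real.sqrt_pos.2 hA
  have hρ2 : ρ^2 = 9 * ω ^ 2 - 3 * β ^ 2 + 6 * ω * β := Real.sq_sqrt hA.le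
  have habs : (3*(ω-β))^2 < ρ^2 := by rw [hρ2]; nlinarith
  have h1 : 3*(ω-β) < ρ := by nlinarith
  have h2 : -ρ < 3*(ω-β) := by nlinarith
  set m := 1 / 2 + 3 * (ω - β) / (2 * ρ) with hmdef
  have hm0 : 0 < m := by
    rw [hmdef]
    have : -(1/2 : ℝ) < 3 * (ω - β) / (2 * ρ) := by
      rw [lt_div_iff₀ (by positivity)]; linarith
    linarith
  have hm1 : m < 1 := by
    rw [hmdef]
    have : 3 * (ω - β) / (2 * ρ) < 1/2 := by
      rw [div_lt_iff₀ (by positivity)]; linarith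
    linarith
  have hkm : modulus ω β = Real.sqrt m := by rw [modulus]
  have hkpos : 0 < modulus ω β := by rw [hkm]; exact Real.sqrt_pos.2 hm0
  have hk2 : (modulus ω β)^2 = m := by rw [hkm]; exact Real.sq_sqrt hm0.le
  have hk1 : modulus ω β < 1 := by
    rw [hkm]
    have := Real.sqrt_lt_sqrt hm0.le hm1
    simpa using this
  set K := ellipticK (modulus ω β) with hKdef
  have hKpos : 0 < K := lt_of_lt_of_le (by norm_num) (half_le_ellipticK hkpos.le hk1)
  have hq : 2*ρ*m - ρ = 3*(ω-β) := by
    rw [hmdef]; field_simp; try ring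
  have hωeq : 9*ω^2 = ρ^2 * (m^2 - m + 1) := by
    linear_combination (-(2*ρ*m - ρ + 3*ω - 3*β)/4) * hq + (-3/4) * hρ2
  -- period equation
  have hsρ : 0 < Real.sqrt ρ := Real.sqrt_pos.2 hρ
  have hper' : 2 * Real.sqrt 6 * K = L * Real.sqrt ρ := by
    rw [periodT, ← hρdef, ← hKdef] at hper
    rw [← hper]
    field_simp
  have hρL : 24 * K^2 = L^2 * ρ := by
    have := congrArg (fun x => x^2) hper'
    have h6 : Real.sqrt 6 ^ 2 = 6 := Real.sq_sqrt (by norm_num)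
    have hρs : Real.sqrt ρ ^ 2 = ρ := Real.sq_sqrt hρ.le
    nlinarith [this, h6, hρs]
  constructor
  · exact hkpos
  constructor
  · exact hk1
  · rw [hk2]
    linear_combination (L^4) * hωeq - ((L^2*ρ + 24*K^2) * (m^2 - m + 1)) * hρL

/-- For fixed `L > 0`, if `β₂fun ω₀` denotes the unique value in `(0, 2ω₀)` with
`T(β₂fun ω₀; ω₀) = L`, then `ω₀ ↦ k(β₂fun ω₀; ω₀)` is strictly increasing on
`(2π²/L², +∞)`. -/
theorem stmt_10 (L : ℝ) (hL : 0 < L) (β₂fun : ℝ → ℝ)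
    (hβ : ∀ ω₀ ∈ Set.Ioi (2 * Real.pi ^ 2 / L ^ 2),
      β₂fun ω₀ ∈ Set.Ioo 0 (2 * ω₀) ∧ periodT ω₀ (β₂fun ω₀) = L) :
    StrictMonoOn (fun ω₀ => modulus ω₀ (β₂fun ω₀))
      (Set.Ioi (2 * Real.pi ^ 2 / L ^ 2)) := by
  intro x hx y hy hxy
  have hd : 0 < 2 * Real.pi ^ 2 / L ^ 2 := by positivity
  have hx0 : 0 < x := lt_trans hd hx
  have hy0 : 0 < y := lt_trans hd hy
  obtain ⟨hbx, hpx⟩ := hβ x hx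
  obtain ⟨hby, hpy⟩ := hβ y hy
  obtain ⟨hkx0, hkx1, hxeq⟩ := omega_char hL hx0 hbx.1 hbx.2 hpx
  obtain ⟨hky0, hky1, hyeq⟩ := omega_char hL hy0 hby.1 hby.2 hpy
  show modulus x (β₂fun x) < modulus y (β₂fun y)
  by_contra hcon
  push_neg at hcon
  have hmono := K4_mono hky0.le hcon hkx1
  have hle : 9*y^2*L^4 ≤ 9*x^2*L^4 := by
    rw [hxeq, hyeq]; linarith [hmono]
  nlinarith [hle, mul_pos (mul_pos (sub_pos.2 hxy) (show (0:ℝ) < x + y by linarith))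
    (pow_pos hL 4)]
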